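/- arXiv:2602.07712 — 3 statements merged into one kernel-verified Lean document; each statement's English description precedes it below -/
import Mathlib

section
/- Let (λ_i)_{i≥1} be a sequence in (0,1] and (w_i)_{i≥1} nonnegative reals with Σ_{i=1}^∞ w_i < ∞, and suppose the associated spectral measure has spectral dimension ω > 0 with constant c > 0. Then the excess loss F(k) := Σ_{i=1}^∞ w_i (1 − λ_i)^{2k} satisfies F(k) = O((log k / k)^ω) as k → ∞; that is, there exist a constant C > 0 and k_0 such that for all k ≥ k_0, F(k) ≤ C·(log k / k)^ω. (This is the scaling law L(θ_k) = L* + Õ(k^{−ω}) for gradient descent on an infinite-dimensional quadratic.) -/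
/-!
Split the spectrum at the threshold `u = ω log k / k`. Eigenvalues below `u` contribute at most
their total weight `σ(0,u) ≤ 2 (c/ω) u^ω = O((log k / k)^ω)`, by the spectral-dimension asymptotics.
Every eigenvalue `λ ≥ u` is damped by `(1 - λ)^(2k) ≤ exp(-2ku) = k^(-2ω)`, so these contribute
at most `(∑ w) k^(-2ω)`, which is also `O((log k / k)^ω)`.
-/

open Filter Topology Real

theorem eventually_le_two_mul_of_tendsto_div_one {α : Type*} {l : Filter α} {f g : α → ℝ}
    (hg : ∀ᶠ x in l, 0 < g x) (h : Tendsto (fun x => f x / g x) l (𝓝 1)) :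
    ∀ᶠ x in l, f x ≤ 2 * g x := by
  filter_upwards [h.eventually_lt_const one_lt_two, hg] with x hx hgx
  exact ((div_lt_iff₀ hgx).mp hx).le

theorem tendsto_const_mul_log_div_self_nhdsGT_zero {a : ℝ} (ha : 0 < a) :
    Tendsto (fun k : ℕ => a * (log k / k)) atTop (𝓝[>] 0) := by
  have hlim : Tendsto (fun x : ℝ => log x / x) atTop (𝓝 0) := by
    simpa using isLittleO_log_id_atTop.tendsto_div_nhds_zero
  refine tendsto_nhdsWithin_iff.mpr
    ⟨by simpa using (hlim.comp tendsto_natCast_atTop_atTop).const_mul a, ?_⟩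
  filter_upwards [eventually_gt_atTop 1] with k hk
  have hk : (1 : ℝ) < k := by exact_mod_cast hk
  exact mul_pos ha (div_pos (log_pos hk) (by linarith))

theorem one_sub_pow_le_exp_neg_mul {x : ℝ} (hx : x ≤ 1) (n : ℕ) :
    (1 - x) ^ n ≤ exp (-(n * x)) := by
  calc (1 - x) ^ n ≤ exp (-x) ^ n :=
        pow_le_pow_left₀ (by linarith) (by linarith [add_one_le_exp (-x)]) n
    _ = exp (-(n * x)) := by rw [← exp_nat_mul, mul_neg]

theorem tsum_mul_one_sub_pow_le {lam w : ℕ → ℝ} (hlam : ∀ i, lam i ∈ Set.Icc (0 : ℝ) 1)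
    (hw : ∀ i, 0 ≤ w i) (hsum : Summable w) (u : ℝ) (n : ℕ) :
    ∑' i, w i * (1 - lam i) ^ n ≤
      (∑' i : {i : ℕ // lam i < u}, w i) + (∑' i, w i) * exp (-(n * u)) := by
  set f : ℕ → ℝ := fun i => w i * (1 - lam i) ^ n
  have hf_nonneg (i : ℕ) : 0 ≤ f i :=
    mul_nonneg (hw i) (pow_nonneg (by linarith [(hlam i).2]) n)
  have hf_le (i : ℕ) : f i ≤ w i :=
    mul_le_of_le_one_right (hw i)
      (pow_le_one₀ (by linarith [(hlam i).2]) (by linarith [(hlam i).1]))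
  have hf : Summable f := hsum.of_nonneg_of_le hf_nonneg hf_le
  set s : Set ℕ := {i | lam i < u}
  have hf_large (i : ↥sᶜ) : f i ≤ w i * exp (-(n * u)) := by
    have hui : u ≤ lam i := not_lt.mp i.2
    refine mul_le_mul_of_nonneg_left ((one_sub_pow_le_exp_neg_mul (hlam i).2 n).trans ?_) (hw i)
    gcongr
  rw [← hf.tsum_subtype_add_tsum_subtype_compl s]
  gcongr
  · exact (hf.subtype s).tsum_le_tsum (fun i => hf_le i) (hsum.subtype s)
  · calc ∑' i : ↥sᶜ, f i ≤ ∑' i : ↥sᶜ, w i * exp (-(n * u)) :=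
          (hf.subtype _).tsum_le_tsum hf_large ((hsum.subtype _).mul_right _)
      _ = (∑' i : ↥sᶜ, w i) * exp (-(n * u)) := tsum_mul_right
      _ ≤ (∑' i, w i) * exp (-(n * u)) := by
          gcongr
          exact Summable.tsum_subtype_le w _ hw hsum

theorem exp_neg_two_mul_mul_log_le_rpow {x ω : ℝ} (hx : exp 1 ≤ x) (hω : 0 ≤ ω) :
    exp (-(2 * ω * log x)) ≤ (log x / x) ^ ω := by
  have hx0 : 0 < x := (exp_pos 1).trans_le hx
  have hlog : 1 ≤ log x := (le_log_iff_exp_le hx0).mpr hx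
  calc exp (-(2 * ω * log x)) ≤ exp (log x * -ω) := by gcongr; nlinarith
    _ = x⁻¹ ^ ω := by rw [← rpow_def_of_pos hx0, rpow_neg hx0.le, inv_rpow hx0.le]
    _ ≤ (log x / x) ^ ω := by
        gcongr
        rw [inv_eq_one_div]
        gcongr

/-- If the spectral measure `σ(0,u) = ∑_{i : λ i < u} w i` associated with
eigenvalues `λ i ∈ (0,1]` and summable nonnegative weights `w i` has spectral dimension
`ω > 0` with constant `c > 0` (i.e. `σ(0,u) / ((c/ω)·u^ω) → 1` as `u → 0⁺`), then the
excess loss `F(k) = ∑' i, w i (1 - λ i)^(2k)` satisfies `F(k) = O((log k / k)^ω)`: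
there are `C > 0` and `k₀` with `F(k) ≤ C (log k / k)^ω` for all `k ≥ k₀`. -/
theorem excess_loss_scaling_law_infinite_dim
    (lam w : ℕ → ℝ)
    (hlam : ∀ i, lam i ∈ Set.Ioc (0 : ℝ) 1)
    (hw : ∀ i, 0 ≤ w i) (hsum : Summable w)
    (ω c : ℝ) (hω : 0 < ω) (hc : 0 < c)
    (hdim : Tendsto
      (fun u : ℝ => (∑' i : {i : ℕ // lam i < u}, w i) / ((c / ω) * u ^ ω))
      (nhdsWithin 0 (Set.Ioi 0)) (nhds 1)) :
    ∃ C > (0 : ℝ), ∃ k₀ : ℕ, ∀ k : ℕ, k₀ ≤ k →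
      (∑' i : ℕ, w i * (1 - lam i) ^ (2 * k)) ≤ C * (Real.log k / k) ^ ω := by
  have hσ := eventually_le_two_mul_of_tendsto_div_one
    (eventually_mem_nhdsWithin.mono fun u (hu : 0 < u) => by positivity) hdim
  obtain ⟨N, hN⟩ :=
    eventually_atTop.mp ((tendsto_const_mul_log_div_self_nhdsGT_zero hω).eventually hσ)
  refine ⟨2 * (c / ω) * ω ^ ω + ∑' i, w i,
    add_pos_of_pos_of_nonneg (by positivity) (tsum_nonneg hw), max N 3, fun k hk => ?_⟩
  have hk3 : (3 : ℝ) ≤ k := by exact_mod_cast (le_max_right N 3).trans hk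
  have hk0 : (k : ℝ) ≠ 0 := by positivity
  have hke : exp 1 ≤ k := by linarith [exp_one_lt_d9]
  have hexponent : ((2 * k : ℕ) : ℝ) * (ω * (log k / k)) = 2 * ω * log k := by
    push_cast; field_simp
  calc ∑' i, w i * (1 - lam i) ^ (2 * k)
      ≤ (∑' i : {i : ℕ // lam i < ω * (log k / k)}, w i)
          + (∑' i, w i) * exp (-(((2 * k : ℕ) : ℝ) * (ω * (log k / k)))) :=
        tsum_mul_one_sub_pow_le (fun i => Set.Ioc_subset_Icc_self (hlam i)) hw hsum _ _
    _ ≤ 2 * ((c / ω) * (ω * (log k / k)) ^ ω) + (∑' i, w i) * (log k / k) ^ ω := by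
        rw [hexponent]
        gcongr
        · exact hN k ((le_max_left N 3).trans hk)
        · exact tsum_nonneg hw
        · exact exp_neg_two_mul_mul_log_le_rpow hke hω.le
    _ = (2 * (c / ω) * ω ^ ω + ∑' i, w i) * (log k / k) ^ ω := by
        rw [mul_rpow hω.le (by positivity)]; ring
end

section
/- Let (λ_i)_{i≥1} be a strictly decreasing sequence in (0,1] converging to 0, and (w_i)_{i≥1} nonnegative reals with Σ_{i=1}^∞ w_i < ∞, such that the associated spectral measure has spectral dimension ω > 0 with constant c > 0. Then (Phase 1 of the theoretical scaling law): (i) the approximation error satisfies E_approx(d) = Σ_{i>d} w_i ∼ (c/ω)·λ_d^ω as d → ∞, and (ii) there exist C > 0 and k_0 such that for all pairs (k, d) with k ≥ k_0 and k·λ_d ≤ 1, the optimization error satisfies E_opt(k,d) := Σ_{i=1}^d w_i (1 − λ_i)^{2k} ≤ C·(log k / k)^ω. -/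
/-!
Part (i): since `λ` is strictly decreasing, `{i | λ i < λ d} = {i | d < i}`, so the tail sum is
`σ(0, λ d)`, and `λ d → 0⁺` transports the spectral-dimension limit.

Part (ii): split the optimization error at the threshold `t = ω log k / k`. Eigenvalues below `t`
contribute at most `σ(0, t) ≤ 2 (c/ω) t^ω`, a multiple of `(log k / k)^ω`; for eigenvalues above
`t`, `(1 - λ)^(2k) ≤ exp(-k t) = k^(-ω) ≤ (log k / k)^ω` once `log k ≥ 1`.
-/

open Filter Topology Real

theorem StrictAnti.tsum_subtype_lt_apply_eq {α β M : Type*} [LinearOrder α] [Preorder β]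
    [AddCommMonoid M] [TopologicalSpace M] {f : α → β} (hf : StrictAnti f) (w : α → M) (a : α) :
    ∑' i : {i // f i < f a}, w i = ∑' i : {i // a < i}, w i :=
  (Equiv.subtypeEquivRight (p := fun i => f i < f a) (q := (a < ·)) fun _ =>
    hf.lt_iff_gt).tsum_eq fun i => w i

section WeightedSums

variable {ι : Type*} {w f : ι → ℝ} {p : ι → Prop} [DecidablePred p]

theorem sum_filter_le_tsum_subtype (hw : ∀ i, 0 ≤ w i) (hsum : Summable w) (s : Finset ι) :
    ∑ i ∈ s with p i, w i ≤ ∑' i : {i // p i}, w i := by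
  rw [← Finset.sum_subtype_eq_sum_filter]
  exact (hsum.subtype _).sum_le_tsum _ fun i _ => hw i

theorem sum_mul_le_tsum_subtype_add_tsum_mul (hw : ∀ i, 0 ≤ w i) (hsum : Summable w)
    (s : Finset ι) {q : ℝ} (hq : 0 ≤ q) (hf_pos : ∀ i, p i → f i ≤ 1)
    (hf_neg : ∀ i, ¬ p i → f i ≤ q) :
    ∑ i ∈ s, w i * f i ≤ ∑' i : {i // p i}, w i + (∑' i, w i) * q := by
  rw [← Finset.sum_filter_add_sum_filter_not s p]
  gcongr ?_ + ?_
  · calc ∑ i ∈ s with p i, w i * f i ≤ ∑ i ∈ s with p i, w i :=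
          Finset.sum_le_sum fun i hi =>
            mul_le_of_le_one_right (hw i) (hf_pos i (Finset.mem_filter.1 hi).2)
      _ ≤ ∑' i : {i // p i}, w i := sum_filter_le_tsum_subtype hw hsum s
  · calc ∑ i ∈ s with ¬ p i, w i * f i ≤ (∑ i ∈ s with ¬ p i, w i) * q := by
          rw [Finset.sum_mul]
          exact Finset.sum_le_sum fun i hi =>
            mul_le_mul_of_nonneg_left (hf_neg i (Finset.mem_filter.1 hi).2) (hw i)
      _ ≤ (∑' i, w i) * q := by
          gcongr
          exact hsum.sum_le_tsum _ fun i _ => hw i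

end WeightedSums

theorem one_sub_pow_le_rpow_neg {x ω : ℝ} {k : ℕ} (hk : 0 < k) (hx : x ≤ 1)
    (hωx : ω * (log k / k) ≤ x) : (1 - x) ^ k ≤ (k : ℝ) ^ (-ω) := by
  have hk' : (0 : ℝ) < k := by exact_mod_cast hk
  have hlog : log k * ω ≤ k * x :=
    calc log k * ω = k * (ω * (log k / k)) := by field_simp
      _ ≤ k * x := by gcongr
  calc (1 - x) ^ k = (1 - k * x / k) ^ k := by rw [mul_div_cancel_left₀ _ hk'.ne']
    _ ≤ exp (-(k * x)) := one_sub_div_pow_le_exp_neg (by nlinarith)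
    _ ≤ exp (log k * -ω) := by gcongr; linarith
    _ = (k : ℝ) ^ (-ω) := (rpow_def_of_pos hk' _).symm

theorem rpow_neg_le_log_div_rpow {ω : ℝ} (hω : 0 ≤ ω) {k : ℕ} (hk : 3 ≤ k) :
    (k : ℝ) ^ (-ω) ≤ (log k / k) ^ ω := by
  have hk' : (0 : ℝ) < k := by positivity
  have hlog : 1 ≤ log k := by
    rw [le_log_iff_exp_le hk']
    exact exp_one_lt_three.le.trans (by exact_mod_cast hk)
  rw [rpow_neg hk'.le, ← inv_rpow hk'.le, inv_eq_one_div]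
  gcongr

theorem one_sub_pow_two_mul_le_log_div_rpow {x ω : ℝ} (hω : 0 ≤ ω) {k : ℕ} (hk : 3 ≤ k)
    (hx : x ≤ 1) (hωx : ω * (log k / k) ≤ x) : (1 - x) ^ (2 * k) ≤ (log k / k) ^ ω := by
  have hx0 : 0 ≤ x := le_trans (by positivity) hωx
  calc (1 - x) ^ (2 * k) ≤ (1 - x) ^ k :=
        pow_le_pow_of_le_one (by linarith) (by linarith) (by omega)
    _ ≤ (k : ℝ) ^ (-ω) := one_sub_pow_le_rpow_neg (by omega) hx hωx
    _ ≤ (log k / k) ^ ω := rpow_neg_le_log_div_rpow hω hk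

theorem eventually_le_two_mul_of_tendsto_div {α : Type*} {l : Filter α} {f g : α → ℝ}
    (h : Tendsto (fun x => f x / g x) l (𝓝 1)) (hg : ∀ᶠ x in l, 0 < g x) :
    ∀ᶠ x in l, f x ≤ 2 * g x := by
  filter_upwards [h.eventually (eventually_le_nhds one_lt_two), hg] with x hx hgx
  exact (div_le_iff₀ hgx).1 hx

theorem tendsto_mul_log_div_self_nhdsGT {ω : ℝ} (hω : 0 < ω) :
    Tendsto (fun k : ℕ => ω * (log k / k)) atTop (𝓝[>] 0) := by
  refine tendsto_nhdsWithin_of_tendsto_nhds_of_eventually_within _ ?_ ?_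
  · have h : Tendsto (fun x : ℝ => log x / x) atTop (𝓝 0) := by
      simpa using tendsto_pow_log_div_mul_add_atTop 1 0 1 one_ne_zero
    simpa using (h.comp tendsto_natCast_atTop_atTop).const_mul ω
  · filter_upwards [eventually_ge_atTop 2] with k hk
    have hk' : (1 : ℝ) < k := by exact_mod_cast hk
    exact mul_pos hω (div_pos (log_pos hk') (by linarith))

/-- **Phase 1 of the theoretical scaling law.** For strictly decreasing
eigenvalues `λ i ∈ (0,1]` tending to `0` and summable nonnegative weights `w i` whose
spectral measure `σ(0,u) = ∑_{i : λ i < u} w i` has spectral dimension `ω > 0` with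
constant `c > 0`:
(i) the approximation error satisfies `∑_{i > d} w i ∼ (c/ω) · (λ d)^ω` as `d → ∞`, and
(ii) there exist `C > 0` and `k₀` such that for all `(k, d)` with `k ≥ k₀` and
`k · λ d ≤ 1`, the optimization error satisfies
`∑_{i ≤ d} w i (1 - λ i)^(2k) ≤ C · (log k / k)^ω`. -/
theorem phase_one_scaling_law
    (lam w : ℕ → ℝ)
    (hlam : ∀ i, lam i ∈ Set.Ioc (0 : ℝ) 1) (hdec : StrictAnti lam)
    (hlam0 : Tendsto lam atTop (nhds 0))
    (hw : ∀ i, 0 ≤ w i) (hsum : Summable w)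
    (ω c : ℝ) (hω : 0 < ω) (hc : 0 < c)
    (hdim : Tendsto
      (fun u : ℝ => (∑' i : {i : ℕ // lam i < u}, w i) / ((c / ω) * u ^ ω))
      (nhdsWithin 0 (Set.Ioi 0)) (nhds 1)) :
    (Tendsto
        (fun d : ℕ => (∑' i : {i : ℕ // d < i}, w i) / ((c / ω) * lam d ^ ω))
        atTop (nhds 1)) ∧
      ∃ C > (0 : ℝ), ∃ k₀ : ℕ, ∀ k d : ℕ, k₀ ≤ k → (k : ℝ) * lam d ≤ 1 →
        (∑ i ∈ Finset.Iic d, w i * (1 - lam i) ^ (2 * k)) ≤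
          C * (Real.log k / k) ^ ω := by
  constructor
  · have hlam_pos : Tendsto lam atTop (𝓝[>] 0) :=
      tendsto_nhdsWithin_of_tendsto_nhds_of_eventually_within _ hlam0
        (.of_forall fun d => (hlam d).1)
    exact (hdim.comp hlam_pos).congr fun d => by
      simp only [Function.comp_apply, hdec.tsum_subtype_lt_apply_eq]
  · set t : ℕ → ℝ := fun k => ω * (log k / k)
    have hσ : ∀ᶠ k in atTop, ∑' i : {i // lam i < t k}, w i ≤ 2 * ((c / ω) * t k ^ ω) :=
      (tendsto_mul_log_div_self_nhdsGT hω).eventually <| eventually_le_two_mul_of_tendsto_div hdim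
        (eventually_mem_nhdsWithin.mono fun u hu => mul_pos (div_pos hc hω) (rpow_pos_of_pos hu ω))
    obtain ⟨k₀, hk₀⟩ := eventually_atTop.1 (hσ.and (eventually_ge_atTop 3))
    refine ⟨2 * (c / ω) * ω ^ ω + ∑' i, w i,
      add_pos_of_pos_of_nonneg (by positivity) (tsum_nonneg hw), k₀, fun k d hk _ => ?_⟩
    obtain ⟨hσk, hk3⟩ := hk₀ k hk
    have hq : 0 ≤ log k / k := div_nonneg (log_natCast_nonneg k) k.cast_nonneg
    calc ∑ i ∈ Finset.Iic d, w i * (1 - lam i) ^ (2 * k)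
        ≤ ∑' i : {i // lam i < t k}, w i + (∑' i, w i) * (log k / k) ^ ω :=
          sum_mul_le_tsum_subtype_add_tsum_mul hw hsum _ (rpow_nonneg hq ω)
            (fun i _ => pow_le_one₀ (by linarith [(hlam i).2]) (by linarith [(hlam i).1]))
            (fun i hi => one_sub_pow_two_mul_le_log_div_rpow hω.le hk3 (hlam i).2 (not_lt.1 hi))
      _ ≤ 2 * ((c / ω) * t k ^ ω) + (∑' i, w i) * (log k / k) ^ ω := by gcongr
      _ = (2 * (c / ω) * ω ^ ω + ∑' i, w i) * (log k / k) ^ ω := by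
          rw [mul_rpow hω.le hq]; ring
end

section
/- Let γ, L, Δ > 0 with γL ∈ (0,1], and let α, β > 0 with α + β > 1. Define λ_i = γL·i^{−α} and w_i = (L·Δ²/2)·i^{−(α+β)} for i ≥ 1, and set ω := 1 + (β−1)/α and c := L·Δ² / (2α·(γL)^ω). Then the associated spectral measure has spectral dimension ω with constant c; that is, σ(0,u) := Σ_{i : λ_i < u} w_i satisfies σ(0,u) / ((c/ω)·u^ω) → 1 as u → 0+. -/
open Filter Real Topology

/-! With `p = α + β` and the threshold `t = (γL/u)^(1/α)`, one has `λ i < u ↔ t < i`, so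
`σ(0,u) = (LΔ²/2) ∑_{i > t} i^(-p)`, while `(c/ω) u^ω = (LΔ²/2) t^(1-p)/(p-1)` exactly.
By the mean value theorem each term `i^(-p)` is squeezed between consecutive increments of
`x^(1-p)/(1-p)`, and telescoping gives
`(⌊t⌋+1)^(1-p) ≤ (p-1) ∑_{i > t} i^(-p) ≤ ⌊t⌋^(1-p)`;
both bounds are `~ t^(1-p)` as `t → ∞`, i.e. as `u → 0⁺`. -/

theorem Antitone.hasSum_sub_succ {f : ℕ → ℝ} {l : ℝ} (hf : Antitone f)
    (hl : Tendsto f atTop (𝓝 l)) : HasSum (fun n => f n - f (n + 1)) (f 0 - l) := by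
  rw [hasSum_iff_tendsto_nat_of_nonneg fun n => sub_nonneg.2 (hf n.le_succ)]
  simp_rw [Finset.sum_range_sub']
  exact tendsto_const_nhds.sub hl

theorem tsum_subtype_lt_natCast_eq {M : Type*} [AddCommMonoid M] [TopologicalSpace M]
    (f : ℕ → M) {x : ℝ} (hx : 0 ≤ x) :
    ∑' i : {i : ℕ // x < i}, f i = ∑' k : ℕ, f (⌊x⌋₊ + 1 + k) := by
  have hrange : Set.range (fun k : ℕ => ⌊x⌋₊ + 1 + k) = {i : ℕ | x < i} := by
    ext i
    simp only [Set.mem_range, Set.mem_ofPred_eq, ← Nat.floor_lt hx]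
    exact ⟨by rintro ⟨k, rfl⟩; omega, fun h => ⟨i - (⌊x⌋₊ + 1), by omega⟩⟩
  change ∑' i : {i : ℕ | x < i}, f i = _
  rw [← hrange, tsum_range f (add_right_injective _)]

namespace Real

variable {a p : ℝ}

theorem exists_rpow_sub_rpow_add_one_eq (ha : 0 < a) :
    ∃ ξ ∈ Set.Ioo a (a + 1), a ^ (1 - p) - (a + 1) ^ (1 - p) = (p - 1) * ξ ^ (-p) := by
  have hderiv : ∀ x ∈ Set.Ioo a (a + 1),
      HasDerivAt (fun x => x ^ (1 - p)) ((1 - p) * x ^ (-p)) x := fun x hx => by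
    simpa using hasDerivAt_rpow_const (p := 1 - p) (Or.inl (ha.trans hx.1).ne')
  have hcont : ContinuousOn (fun x => x ^ (1 - p)) (Set.Icc a (a + 1)) :=
    continuousOn_id.rpow_const fun x hx => Or.inl (ha.trans_le hx.1).ne'
  obtain ⟨ξ, hξ, hslope⟩ := exists_hasDerivAt_eq_slope _ _ (lt_add_one a) hcont hderiv
  refine ⟨ξ, hξ, ?_⟩
  rw [add_sub_cancel_left, div_one] at hslope
  linarith

theorem rpow_sub_rpow_add_one_le (hp : 1 ≤ p) (ha : 0 < a) :
    a ^ (1 - p) - (a + 1) ^ (1 - p) ≤ (p - 1) * a ^ (-p) := by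
  obtain ⟨ξ, hξ, heq⟩ := exists_rpow_sub_rpow_add_one_eq (p := p) ha
  rw [heq]
  exact mul_le_mul_of_nonneg_left (rpow_le_rpow_of_nonpos ha hξ.1.le (by linarith))
    (by linarith)

theorem le_rpow_sub_rpow_add_one (hp : 1 ≤ p) (ha : 0 < a) :
    (p - 1) * (a + 1) ^ (-p) ≤ a ^ (1 - p) - (a + 1) ^ (1 - p) := by
  obtain ⟨ξ, hξ, heq⟩ := exists_rpow_sub_rpow_add_one_eq (p := p) ha
  rw [heq]
  exact mul_le_mul_of_nonneg_left
    (rpow_le_rpow_of_nonpos (ha.trans hξ.1) hξ.2.le (by linarith)) (by linarith)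

theorem hasSum_rpow_sub_rpow_add_one (hp : 1 < p) (ha : 0 < a) :
    HasSum (fun k : ℕ => (a + k) ^ (1 - p) - (a + k + 1) ^ (1 - p)) (a ^ (1 - p)) := by
  have hanti : Antitone fun k : ℕ => (a + k) ^ (1 - p) := fun m n hmn =>
    rpow_le_rpow_of_nonpos (by positivity) (by gcongr) (by linarith)
  have hlim : Tendsto (fun k : ℕ => (a + k) ^ (1 - p)) atTop (𝓝 0) := by
    simpa [Function.comp_def] using
      (tendsto_rpow_neg_atTop (by linarith : 0 < p - 1)).comp
        (tendsto_atTop_add_const_left _ a tendsto_natCast_atTop_atTop)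
  simpa [add_assoc] using hanti.hasSum_sub_succ hlim

theorem summable_rpow_neg_add_nat_add_one (hp : 1 < p) (ha : 0 < a) :
    Summable fun k : ℕ => (a + k + 1) ^ (-p) := by
  refine .of_nonneg_of_le (fun k => by positivity) (fun k => ?_)
    ((hasSum_rpow_sub_rpow_add_one hp ha).summable.div_const (p - 1))
  rw [le_div_iff₀ (by linarith), mul_comm]
  exact le_rpow_sub_rpow_add_one hp.le (by positivity)

theorem mul_tsum_rpow_neg_add_nat_add_one_le (hp : 1 < p) (ha : 0 < a) :
    (p - 1) * ∑' k : ℕ, (a + k + 1) ^ (-p) ≤ a ^ (1 - p) := by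
  rw [← tsum_mul_left]
  exact hasSum_le (fun k => le_rpow_sub_rpow_add_one hp.le (by positivity))
    ((summable_rpow_neg_add_nat_add_one hp ha).mul_left _).hasSum
    (hasSum_rpow_sub_rpow_add_one hp ha)

theorem rpow_add_one_le_mul_tsum_rpow_neg_add_nat_add_one (hp : 1 < p) (ha : 0 < a) :
    (a + 1) ^ (1 - p) ≤ (p - 1) * ∑' k : ℕ, (a + k + 1) ^ (-p) := by
  rw [← tsum_mul_left]
  refine hasSum_le (fun k => ?_) (hasSum_rpow_sub_rpow_add_one hp (by positivity : 0 < a + 1))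
    ((summable_rpow_neg_add_nat_add_one hp ha).mul_left _).hasSum
  rw [add_right_comm a 1]
  exact rpow_sub_rpow_add_one_le hp.le (by positivity)

theorem tendsto_tsum_rpow_neg_tail_div (hp : 1 < p) :
    Tendsto
      (fun x : ℝ => (∑' i : {i : ℕ // x < i}, (i : ℝ) ^ (-p)) / (x ^ (1 - p) / (p - 1)))
      atTop (𝓝 1) := by
  have hfloor : Tendsto (fun x : ℝ => ((⌊x⌋₊ : ℝ) / x) ^ (1 - p)) atTop (𝓝 1) := by
    simpa using tendsto_nat_floor_div_atTop.rpow_const (p := 1 - p) (Or.inl one_ne_zero)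
  have hfloor_add_one :
      Tendsto (fun x : ℝ => ((⌊x⌋₊ + 1 : ℝ) / x) ^ (1 - p)) atTop (𝓝 1) := by
    have h := (tendsto_nat_floor_div_atTop.add tendsto_inv_atTop_zero).rpow_const
      (p := 1 - p) (Or.inl (by norm_num : (1 : ℝ) + 0 ≠ 0))
    simpa [add_div] using h
  have hratio : ∀ x : ℝ, 1 ≤ x →
      (∑' i : {i : ℕ // x < i}, (i : ℝ) ^ (-p)) / (x ^ (1 - p) / (p - 1)) =
        (p - 1) * (∑' k : ℕ, ((⌊x⌋₊ : ℝ) + k + 1) ^ (-p)) / x ^ (1 - p) := by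
    intro x hx
    rw [tsum_subtype_lt_natCast_eq (fun i : ℕ => (i : ℝ) ^ (-p)) (by linarith)]
    push_cast
    simp_rw [add_right_comm _ (1 : ℝ)]
    field_simp
  have hN : ∀ x : ℝ, 1 ≤ x → (0 : ℝ) < ⌊x⌋₊ := fun x hx => by
    exact_mod_cast Nat.floor_pos.2 hx
  refine tendsto_of_tendsto_of_tendsto_of_le_of_le' hfloor_add_one hfloor ?_ ?_ <;>
    filter_upwards [eventually_ge_atTop 1] with x hx <;>
    rw [hratio x hx, div_rpow (by positivity) (by linarith)] <;>
    gcongr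
  · exact rpow_add_one_le_mul_tsum_rpow_neg_add_nat_add_one hp (hN x hx)
  · exact mul_tsum_rpow_neg_add_nat_add_one_le hp (hN x hx)

theorem mul_rpow_neg_lt_iff {u x α : ℝ} (ha : 0 < a) (hu : 0 < u) (hx : 0 < x) (hα : 0 < α) :
    a * x ^ (-α) < u ↔ (a / u) ^ α⁻¹ < x := by
  rw [rpow_inv_lt_iff_of_pos (by positivity) hx.le hα, rpow_neg hx.le, ← div_eq_mul_inv,
    div_lt_iff₀ (by positivity), div_lt_iff₀ hu, mul_comm]

theorem div_rpow_inv_rpow_neg_mul {u α ω : ℝ} (ha : 0 ≤ a) (hu : 0 ≤ u) (hα : α ≠ 0) :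
    ((a / u) ^ α⁻¹) ^ (-(α * ω)) = u ^ ω / a ^ ω := by
  rw [← rpow_mul (div_nonneg ha hu), mul_neg, inv_mul_cancel_left₀ hα,
    rpow_neg (div_nonneg ha hu), div_rpow ha hu, inv_div]

theorem tsum_subtype_mul_rpow_neg_lt_eq {C α u : ℝ} (ha : 0 < a) (hα : 0 < α) (hu : 0 < u)
    {lam w : ℕ → ℝ} (hlam : ∀ i : ℕ, 1 ≤ i → lam i = a * (i : ℝ) ^ (-α))
    (hw : ∀ i : ℕ, 1 ≤ i → w i = C * (i : ℝ) ^ (-p)) :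
    ∑' i : {i : ℕ // 1 ≤ i ∧ lam i < u}, w i =
      C * ∑' i : {i : ℕ // (a / u) ^ α⁻¹ < i}, (i : ℝ) ^ (-p) := by
  have ht : 0 < (a / u) ^ α⁻¹ := by positivity
  have hmem : ∀ i : ℕ, 1 ≤ i ∧ lam i < u ↔ (a / u) ^ α⁻¹ < i := by
    rintro (_ | i)
    · simpa using ht.le
    · simp only [le_add_iff_nonneg_left, zero_le, true_and, hlam _ (Nat.succ_pos i)]
      exact mul_rpow_neg_lt_iff ha hu (by positivity) hα
  calc ∑' i : {i : ℕ // 1 ≤ i ∧ lam i < u}, w i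
      = ∑' i : {i : ℕ // (a / u) ^ α⁻¹ < i}, w i :=
        (Equiv.subtypeEquivRight hmem).tsum_eq fun i => w i
    _ = ∑' i : {i : ℕ // (a / u) ^ α⁻¹ < i}, C * (i : ℝ) ^ (-p) :=
        tsum_congr fun i => hw i (by exact_mod_cast ht.trans i.2)
    _ = _ := tsum_mul_left

end Real

theorem power_decay_spectral_dimension_general
    (γ L Δ α β : ℝ)
    (hL : 0 < L) (hΔ : 0 < Δ)
    (hγL : γ * L ∈ Set.Ioc (0 : ℝ) 1)
    (hα : 0 < α) (hαβ : 1 < α + β)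
    (lam w : ℕ → ℝ)
    (hlam : ∀ i : ℕ, 1 ≤ i → lam i = γ * L * (i : ℝ) ^ (-α))
    (hw : ∀ i : ℕ, 1 ≤ i → w i = (L * Δ ^ 2 / 2) * (i : ℝ) ^ (-(α + β)))
    (ω c : ℝ)
    (hω : ω = 1 + (β - 1) / α)
    (hc : c = L * Δ ^ 2 / (2 * α * (γ * L) ^ ω)) :
    Tendsto
      (fun u : ℝ =>
        (∑' i : {i : ℕ // 1 ≤ i ∧ lam i < u}, w i) / ((c / ω) * u ^ ω))
      (nhdsWithin 0 (Set.Ioi 0)) (nhds 1) := by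
  obtain ⟨hγL, -⟩ := hγL
  set p := α + β
  have hαω : α * ω = p - 1 := by rw [hω]; field_simp; ring
  set t : ℝ → ℝ := fun u => (γ * L / u) ^ α⁻¹
  have ht : Tendsto t (𝓝[>] 0) atTop := by
    simpa only [t, div_eq_mul_inv, Function.comp_def] using
      (tendsto_rpow_atTop (inv_pos.2 hα)).comp (tendsto_inv_nhdsGT_zero.const_mul_atTop hγL)
  refine ((tendsto_tsum_rpow_neg_tail_div hαβ).comp ht).congr' ?_
  filter_upwards [self_mem_nhdsWithin] with u (hu : 0 < u)
  have hden : c / ω * u ^ ω = L * Δ ^ 2 / 2 * (t u ^ (1 - p) / (p - 1)) := by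
    rw [← neg_sub, ← hαω, div_rpow_inv_rpow_neg_mul hγL.le hu.le hα.ne', hc]
    field_simp
  rw [Function.comp_apply, tsum_subtype_mul_rpow_neg_lt_eq hγL hα hu hlam hw, hden,
    mul_div_mul_left _ _ (by positivity)]

/-- Under the power-decay (source/capacity) conditions
`λ i = γL · i^(-α)` and `w i = (LΔ²/2) · i^(-(α+β))` for `i ≥ 1`, with `γL ∈ (0,1]`,
`α, β > 0`, `α + β > 1`, the associated spectral measure
`σ(0,u) = ∑_{i ≥ 1 : λ i < u} w i` has spectral dimension `ω = 1 + (β-1)/α` with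
constant `c = LΔ² / (2α(γL)^ω)`; i.e. `σ(0,u) / ((c/ω)·u^ω) → 1` as `u → 0⁺`. -/
theorem power_decay_spectral_dimension
    (γ L Δ α β : ℝ)
    (hγ : 0 < γ) (hL : 0 < L) (hΔ : 0 < Δ)
    (hγL : γ * L ∈ Set.Ioc (0 : ℝ) 1)
    (hα : 0 < α) (hβ : 0 < β) (hαβ : 1 < α + β)
    (lam w : ℕ → ℝ)
    (hlam : ∀ i : ℕ, 1 ≤ i → lam i = γ * L * (i : ℝ) ^ (-α))
    (hw : ∀ i : ℕ, 1 ≤ i → w i = (L * Δ ^ 2 / 2) * (i : ℝ) ^ (-(α + β)))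
    (ω c : ℝ)
    (hω : ω = 1 + (β - 1) / α)
    (hc : c = L * Δ ^ 2 / (2 * α * (γ * L) ^ ω)) :
    Tendsto
      (fun u : ℝ =>
        (∑' i : {i : ℕ // 1 ≤ i ∧ lam i < u}, w i) / ((c / ω) * u ^ ω))
      (nhdsWithin 0 (Set.Ioi 0)) (nhds 1) :=
  power_decay_spectral_dimension_general γ L Δ α β hL hΔ hγL hα hαβ lam w hlam hw ω c hω hc
end
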